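/- arXiv:1803.05207 — 4 statements merged into one kernel-verified Lean document; each statement's English description precedes it below -/
import Mathlib

section
/- Let N ≥ 1, let x ∈ ℝ^N and let y ∈ ℝ^{2N} be defined by y_k = x_k for 0 ≤ k ≤ N−1 and y_k = x_{2N−1−k} for N ≤ k ≤ 2N−1. Then for every k ∈ {N+1,…,2N−1} one has ŷ_k = −(√(2N)/ε_N(2N−k)) · ω_{4N}^{−k} · x̂ᴵᴵ_{2N−k}. -/
/-- `ω_M = e^{-2πi/M}`. -/
noncomputable def dftOmega (M : ℕ) : ℂ :=
  Complex.exp (-2 * Real.pi * Complex.I / M)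

/-- Discrete Fourier transform of `y ∈ ℂ^M`: `ŷ_k = Σ_{l=0}^{M-1} ω_M^{kl} y_l`. -/
noncomputable def dft (M : ℕ) (y : ℕ → ℂ) (k : ℕ) : ℂ :=
  ∑ l ∈ Finset.range M, dftOmega M ^ (k * l) * y l

/-- `ε_N(k) = 1/√2` if `k ≡ 0 mod N`, else `1`. -/
noncomputable def epsDCT (N k : ℕ) : ℝ :=
  if k % N = 0 then 1 / Real.sqrt 2 else 1

/-- DCT-II of `x ∈ ℝ^N`:
`x̂ᴵᴵ_k = √(2/N) · ε_N(k) · Σ_{l=0}^{N-1} cos(k(2l+1)π/(2N)) x_l`. -/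
noncomputable def dctII (N : ℕ) (x : ℕ → ℝ) (k : ℕ) : ℝ :=
  Real.sqrt (2 / N) * epsDCT N k *
    ∑ l ∈ Finset.range N, Real.cos (k * (2 * l + 1) * Real.pi / (2 * N)) * x l

theorem stmt_2 (N : ℕ) (hN : 1 ≤ N) (x y : ℕ → ℝ)
    (hy₁ : ∀ k, k < N → y k = x k)
    (hy₂ : ∀ k, N ≤ k → k < 2 * N → y k = x (2 * N - 1 - k))
    (k : ℕ) (hk₁ : N + 1 ≤ k) (hk₂ : k < 2 * N) :
    dft (2 * N) (fun l => (y l : ℂ)) k =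
      -((Real.sqrt (2 * N) / epsDCT N (2 * N - k) : ℝ) *
        dftOmega (4 * N) ^ (-(k : ℤ)) * (dctII N x (2 * N - k) : ℝ)) := by
  have hNR : ((N:ℝ)) ≠ 0 := by positivity
  have hNC : ((N:ℂ)) ≠ 0 := by exact_mod_cast Nat.cast_ne_zero.mpr (by omega)
  set c := dftOmega (4 * N) with hcdef
  have hc0 : c ≠ 0 := Complex.exp_ne_zero _
  -- c^m as an exponential
  have hcm : ∀ m : ℕ, c ^ m = Complex.exp ((-(m * Real.pi / (2*N)) : ℝ) * Complex.I) := by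
    intro m
    rw [hcdef, dftOmega, ← Complex.exp_nat_mul]
    congr 1
    push_cast
    field_simp
    ring
  have hcos : ∀ m : ℕ, c ^ m + (c ^ m)⁻¹ =
      ((2 * Real.cos (m * Real.pi / (2*N)) : ℝ) : ℂ) := by
    intro m
    rw [hcm, ← Complex.exp_neg]
    rw [Complex.ofReal_mul, Complex.ofReal_cos, Complex.cos]
    push_cast
    ring
  have hc4N : c ^ (4 * N) = 1 := by
    rw [hcdef, dftOmega, ← Complex.exp_nat_mul]
    rw [show ((4*N : ℕ):ℂ) * (-2 * Real.pi * Complex.I / ((4*N:ℕ):ℂ)) = -(2*Real.pi*Complex.I) by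
      push_cast; field_simp]
    rw [Complex.exp_neg, Complex.exp_two_pi_mul_I, inv_one]
  have h2N : dftOmega (2 * N) = c ^ 2 := by
    rw [hcdef, dftOmega, dftOmega, ← Complex.exp_nat_mul]
    congr 1
    push_cast
    field_simp
    ring
  -- epsilon is 1
  have hmod : (2*N - k) % N = 2*N - k := Nat.mod_eq_of_lt (by omega)
  have heps : epsDCT N (2*N - k) = 1 := by
    rw [epsDCT, hmod, if_neg (by omega)]
  -- the real sum
  set S : ℝ := ∑ l ∈ Finset.range N, Real.cos (k * (2*l+1) * Real.pi / (2*N)) * x l with hS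
  have hcosneg : ∀ l : ℕ, Real.cos (((2*N - k : ℕ):ℝ) * (2*l+1) * Real.pi / (2*N))
      = -Real.cos ((k:ℝ) * (2*l+1) * Real.pi / (2*N)) := by
    intro l
    have hang : (((2*N - k : ℕ):ℝ)) * (2*l+1) * Real.pi / (2*N)
        = ((2*l+1 : ℕ):ℝ) * Real.pi - (k:ℝ) * (2*l+1) * Real.pi / (2*N) := by
      rw [Nat.cast_sub (le_of_lt hk₂)]
      push_cast
      field_simp
    rw [hang, Real.cos_nat_mul_pi_sub, Odd.neg_one_pow ⟨l, by ring⟩]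
    ring
  have hD : dctII N x (2*N - k) = Real.sqrt (2/N) * (-S) := by
    rw [dctII, heps, mul_one]
    congr 1
    rw [hS, ← Finset.sum_neg_distrib]
    apply Finset.sum_congr rfl
    intro l _
    rw [hcosneg l]
    push_cast
    ring
  have hsqrt : Real.sqrt (2*N) * Real.sqrt (2/N) = 2 := by
    rw [← Real.sqrt_mul (by positivity), show (2*(N:ℝ))*(2/N) = 4 by field_simp; ring,
      show (4:ℝ) = 2^2 by norm_num, Real.sqrt_sq (by norm_num)]
  -- cancel c^k
  refine mul_left_cancel₀ (pow_ne_zero k hc0) ?_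
  have hRHS : c ^ k * -((Real.sqrt (2 * N) / epsDCT N (2 * N - k) : ℝ) *
        c ^ (-(k : ℤ)) * ((dctII N x (2 * N - k) : ℝ) : ℂ)) = ((2 * S : ℝ) : ℂ) := by
    rw [heps, hD, zpow_neg, zpow_natCast]
    rw [show c ^ k * -((((Real.sqrt (2*N) / 1 : ℝ)):ℂ) * (c^k)⁻¹ *
        ((Real.sqrt (2/N) * (-S) : ℝ) : ℂ)) =
        -(c ^ k * (c^k)⁻¹ * (((Real.sqrt (2*N) / 1 : ℝ)):ℂ) *
        ((Real.sqrt (2/N) * (-S) : ℝ) : ℂ)) by ring]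
    rw [mul_inv_cancel₀ (pow_ne_zero k hc0)]
    push_cast
    rw [show -(1 * (Real.sqrt (2*N) / 1 : ℂ) * (Real.sqrt (2/N) * -(S:ℂ)))
        = (Real.sqrt (2*N) * Real.sqrt (2/N) : ℝ) * (S:ℂ) by push_cast; ring]
    rw [hsqrt]
    push_cast
    ring
  rw [hRHS]
  -- now the LHS
  rw [dft, h2N, show 2 * N = N + N from by ring, Finset.sum_range_add]
  rw [← Finset.sum_range_reflect (fun j => (c^2) ^ (k * (N + j)) * ((y (N + j) : ℝ) : ℂ)) N]
  rw [mul_add, Finset.mul_sum, Finset.mul_sum, ← Finset.sum_add_distrib]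
  rw [show ((2 * S : ℝ) : ℂ) = ∑ l ∈ Finset.range N,
      ((2 * Real.cos ((k:ℝ) * (2*l+1) * Real.pi / (2*N)) * x l : ℝ) : ℂ) by
    rw [hS, Finset.mul_sum, Complex.ofReal_sum]
    apply Finset.sum_congr rfl
    intro l _
    push_cast
    ring]
  apply Finset.sum_congr rfl
  intro l hl
  simp only [Finset.mem_range] at hl
  have hyl : y l = x l := hy₁ l hl
  have hidx : N + (N - 1 - l) = 2*N - 1 - l := by omega
  have hyl2 : y (N + (N - 1 - l)) = x l := by
    rw [hy₂ _ (by omega) (by omega)]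
    congr 1
    omega
  simp only [hyl, hyl2]
  rw [show c ^ k * ((c^2) ^ (k * l) * ((x l : ℝ):ℂ)) + c ^ k * ((c^2) ^ (k * (N + (N-1-l))) * ((x l : ℝ):ℂ))
      = (c ^ k * (c^2) ^ (k * l) + c ^ k * (c^2) ^ (k * (N + (N-1-l)))) * ((x l:ℝ):ℂ) by ring]
  have e1 : c ^ k * (c^2) ^ (k * l) = c ^ (k * (2*l+1)) := by
    rw [← pow_mul, ← pow_add]
    congr 1
    ring
  have e2 : c ^ k * (c^2) ^ (k * (N + (N-1-l))) = (c ^ (k * (2*l+1)))⁻¹ := by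
    rw [← pow_mul, ← pow_add]
    refine eq_inv_of_mul_eq_one_left ?_
    rw [← pow_add, show k + 2 * (k * (N + (N-1-l))) + k * (2*l+1)
        = k * (1 + 2*(N+(N-1-l)) + (2*l+1)) by ring,
      show 1 + 2*(N+(N-1-l)) + (2*l+1) = 4*N by omega,
      show k * (4*N) = 4*N*k by ring, pow_mul, hc4N, one_pow]
  rw [e1, e2, hcos (k * (2*l+1))]
  push_cast
  ring
end

section
/- Let J ≥ 0 and let y ∈ ℂ^{2^J} satisfy the reflection symmetry y_k = y_{2^J−1−k} for all k. Then for every 0 ≤ j ≤ J the periodization y^{(j)} is also symmetric: y^{(j)}_k = y^{(j)}_{2^j−1−k} for all k ∈ {0,…,2^j−1}. -/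
/-- Periodization `y^{(j)} ∈ ℂ^{2^j}` of `y ∈ ℂ^{2^J}`:
`y^{(j)}_k = Σ_{l=0}^{2^{J-j}-1} y_{k + 2^j l}`. -/
noncomputable def periodization (J j : ℕ) (y : ℕ → ℂ) (k : ℕ) : ℂ :=
  ∑ l ∈ Finset.range (2 ^ (J - j)), y (k + 2 ^ j * l)

theorem stmt_5 (J : ℕ) (y : ℕ → ℂ)
    (hsym : ∀ k, k < 2 ^ J → y k = y (2 ^ J - 1 - k))
    (j : ℕ) (hj : j ≤ J) (k : ℕ) (hk : k < 2 ^ j) :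
    periodization J j y k = periodization J j y (2 ^ j - 1 - k) := by
  unfold periodization
  rw [← Finset.sum_range_reflect (fun l => y (k + 2 ^ j * l))]
  refine Finset.sum_congr rfl ?_
  intro l hl
  simp only [Finset.mem_range] at hl
  set A := 2 ^ j with hA
  set B := 2 ^ (J - j) with hB
  have hAB : 2 ^ J = A * B := by rw [hA, hB, ← pow_add]; congr 1; omega
  have hA1 : 1 ≤ A := Nat.one_le_two_pow
  have h' : A * (l + 1) ≤ A * B := Nat.mul_le_mul_left A (by omega)
  have hP : A * l + A ≤ A * B := by rw [Nat.mul_succ] at h'; exact h'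
  have hmul : A * (B - 1 - l) = A * B - (A * l + A) := by
    have hBl : B - 1 - l = B - (l + 1) := by omega
    rw [hBl, Nat.mul_sub, Nat.mul_succ]
  rw [hmul]
  generalize hp : A * l = p at hP hAB ⊢
  generalize hq : A * B = q at hP hAB ⊢
  have hlt : A - 1 - k + p < 2 ^ J := by omega
  rw [hsym _ hlt]
  congr 1
  omega
end

section
/- Let j ≥ 0, m ≥ 1 with 2m ≤ 2^j, and let v ∈ ℂ^{2^{j+1}} be a nonzero vector whose support S := {l : v_l ≠ 0} has at most 2m elements and is such that the residues l mod 2^j are pairwise distinct for l ∈ S. Then at least one of the first 2m oddly indexed entries of the discrete Fourier transform of v is nonzero: there exists k ∈ {0,…,2m−1} with v̂_{2k+1} ≠ 0. -/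
open scoped Classical

/-!
The odd DFT coefficients are power sums: with `ω = ω_{2^{j+1}}`,
`v̂_{2k+1} = Σ_{l ∈ S} (ω^l v_l) (ω^{2l})^k`. Since `ω²` is a primitive `2^j`-th root of unity,
the nodes `ω^{2l}` are distinct exactly when the residues `l mod 2^j` are, so if the first
`2m ≥ |S|` odd coefficients all vanished, the invertibility of the Vandermonde matrix would force
every `ω^l v_l`, hence every `v_l`, to vanish.
-/

open Finset

theorem Finset.eq_zero_of_forall_sum_mul_pow_eq_zero {R ι : Type*} [CommRing R] [IsDomain R]
    {S : Finset ι} {x c : ι → R} (hx : Set.InjOn x S) {n : ℕ} (hn : #S ≤ n)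
    (h : ∀ k < n, ∑ s ∈ S, c s * x s ^ k = 0) : ∀ s ∈ S, c s = 0 := by
  intro s hs
  let e := S.equivFin
  have hc := Matrix.eq_zero_of_forall_pow_sum_mul_pow_eq_zero
    (f := fun i => x (e.symm i)) (v := fun i => c (e.symm i)) ?_ ?_
  · simpa using congrFun hc (e ⟨s, hs⟩)
  · intro i i' hii'
    exact e.symm.injective (Subtype.ext (hx (e.symm i).2 (e.symm i').2 hii'))
  · intro k
    rw [e.symm.sum_comp (fun t : S => c t * x t ^ (k : ℕ)),
      sum_coe_sort S (fun t => c t * x t ^ (k : ℕ))]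
    exact h k (k.2.trans_le hn)

lemma dftOmega_isPrimitiveRoot {M : ℕ} (hM : M ≠ 0) : IsPrimitiveRoot (dftOmega M) M := by
  simpa [dftOmega, ← Complex.exp_neg, neg_div, neg_mul] using
    (Complex.isPrimitiveRoot_exp M hM).inv

lemma dftOmega_pow_two_mul_eq_iff {N : ℕ} (hN : N ≠ 0) (s t : ℕ) :
    dftOmega (2 * N) ^ (2 * s) = dftOmega (2 * N) ^ (2 * t) ↔ s ≡ t [MOD N] := by
  have h := (dftOmega_isPrimitiveRoot (by omega : 2 * N ≠ 0)).pow (by omega) rfl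
  rw [pow_mul, pow_mul, (h.isOfFinOrder hN).pow_eq_pow_iff_modEq, ← h.eq_orderOf]

lemma dft_two_mul_add_one (M : ℕ) (v : ℕ → ℂ) (k : ℕ) :
    dft M v (2 * k + 1) = ∑ l ∈ (range M).filter (fun l => v l ≠ 0),
      (dftOmega M ^ l * v l) * (dftOmega M ^ (2 * l)) ^ k := by
  rw [dft, sum_filter_of_ne (p := fun l => v l ≠ 0) fun l _ => mt fun hv => by simp [hv]]
  exact sum_congr rfl fun l _ => by ring

theorem stmt_13_general (j m : ℕ) (v : ℕ → ℂ)
    (hv_ne : ∃ l, l < 2 ^ (j + 1) ∧ v l ≠ 0)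
    (hcard : ((Finset.range (2 ^ (j + 1))).filter (fun l => v l ≠ 0)).card ≤ 2 * m)
    (hres : ∀ l₁ l₂, l₁ < 2 ^ (j + 1) → l₂ < 2 ^ (j + 1) → v l₁ ≠ 0 → v l₂ ≠ 0 →
      l₁ % 2 ^ j = l₂ % 2 ^ j → l₁ = l₂) :
    ∃ k, k < 2 * m ∧ dft (2 ^ (j + 1)) v (2 * k + 1) ≠ 0 := by
  by_contra! hdft
  obtain ⟨l, hl, hvl⟩ := hv_ne
  have hnodes : Set.InjOn (fun l => dftOmega (2 ^ (j + 1)) ^ (2 * l))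
      ((range (2 ^ (j + 1))).filter (fun l => v l ≠ 0)) := by
    intro s hs t ht hst
    simp only [coe_filter, mem_range, Set.mem_ofPred_eq] at hs ht
    rw [pow_succ', dftOmega_pow_two_mul_eq_iff (by positivity)] at hst
    exact hres s t hs.1 ht.1 hs.2 ht.2 hst
  have hcoeff := eq_zero_of_forall_sum_mul_pow_eq_zero hnodes hcard
    (fun k hk => (dft_two_mul_add_one _ v k).symm.trans (hdft k hk)) l (by simp [hl, hvl])
  exact hvl ((mul_eq_zero.mp hcoeff).resolve_left (pow_ne_zero _ (Complex.exp_ne_zero _)))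

theorem stmt_13 (j m : ℕ) (hm : 1 ≤ m) (hm2 : 2 * m ≤ 2 ^ j) (v : ℕ → ℂ)
    (hv_len : ∀ l, 2 ^ (j + 1) ≤ l → v l = 0)
    (hv_ne : ∃ l, l < 2 ^ (j + 1) ∧ v l ≠ 0)
    (hcard : ((Finset.range (2 ^ (j + 1))).filter (fun l => v l ≠ 0)).card ≤ 2 * m)
    (hres : ∀ l₁ l₂, l₁ < 2 ^ (j + 1) → l₂ < 2 ^ (j + 1) → v l₁ ≠ 0 → v l₂ ≠ 0 →
      l₁ % 2 ^ j = l₂ % 2 ^ j → l₁ = l₂) :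
    ∃ k, k < 2 * m ∧ dft (2 ^ (j + 1)) v (2 * k + 1) ≠ 0 :=
  stmt_13_general j m v hv_ne hcard hres
end

section
/- Let j ≥ 0, let v ∈ ℝ^{2^{j+1}} have only nonnegative entries, and let w ∈ ℝ^{2^j} be its periodization, w_k := v_k + v_{k+2^j} for k ∈ {0,…,2^j−1}. If the number of nonzero entries of v equals the number of nonzero entries of w, then for every k ∈ {0,…,2^j−1} at least one of v_k and v_{k+2^j} is zero; consequently either (v_k = w_k and v_{k+2^j} = 0) or (v_k = 0 and v_{k+2^j} = w_k). -/
open scoped Classical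

theorem stmt_16 (j : ℕ) (v w : ℕ → ℝ) (hv : ∀ k, 0 ≤ v k)
    (hw : ∀ k, k < 2 ^ j → w k = v k + v (k + 2 ^ j))
    (hcard : ((Finset.range (2 ^ (j + 1))).filter (fun k => v k ≠ 0)).card =
      ((Finset.range (2 ^ j)).filter (fun k => w k ≠ 0)).card) :
    ∀ k, k < 2 ^ j → (v k = 0 ∨ v (k + 2 ^ j) = 0) ∧
      ((v k = w k ∧ v (k + 2 ^ j) = 0) ∨ (v k = 0 ∧ v (k + 2 ^ j) = w k)) := by
  set f : ℕ → ℕ := fun k => (if v k ≠ 0 then 1 else 0) + (if v (k + 2 ^ j) ≠ 0 then 1 else 0)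
    with hf
  set g : ℕ → ℕ := fun k => if w k ≠ 0 then 1 else 0 with hg
  have hsumv : ((Finset.range (2 ^ (j + 1))).filter (fun k => v k ≠ 0)).card
      = ∑ k ∈ Finset.range (2 ^ j), f k := by
    rw [Finset.card_filter]
    have h2 : 2 ^ (j + 1) = 2 ^ j + 2 ^ j := by ring
    rw [h2, Finset.sum_range_add, ← Finset.sum_add_distrib]
    simp [hf, add_comm]
  have hsumw : ((Finset.range (2 ^ j)).filter (fun k => w k ≠ 0)).card
      = ∑ k ∈ Finset.range (2 ^ j), g k := by
    rw [Finset.card_filter]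
  have hle : ∀ k ∈ Finset.range (2 ^ j), g k ≤ f k := by
    intro k hk
    simp only [hf, hg]
    by_cases h : w k ≠ 0
    · rw [if_pos h]
      rw [hw k (Finset.mem_range.mp hk)] at h
      by_cases h1 : v k = 0
      · have : v (k + 2 ^ j) ≠ 0 := by
          intro h2; exact h (by rw [h1, h2]; ring)
        simp [this]
      · simp [h1]
    · simp [h]
  have hsum : ∑ k ∈ Finset.range (2 ^ j), g k = ∑ k ∈ Finset.range (2 ^ j), f k := by
    rw [← hsumv, ← hsumw, hcard]
  have heq : ∀ k ∈ Finset.range (2 ^ j), g k = f k :=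
    (Finset.sum_eq_sum_iff_of_le hle).mp hsum
  intro k hk
  have hgf := heq k (Finset.mem_range.mpr hk)
  have hkey : v k = 0 ∨ v (k + 2 ^ j) = 0 := by
    by_contra hcon
    push_neg at hcon
    obtain ⟨h1, h2⟩ := hcon
    simp only [hf, hg, h1, h2, if_pos, ne_eq, not_false_eq_true, if_true] at hgf
    split at hgf <;> omega
  refine ⟨hkey, ?_⟩
  have hwk := hw k hk
  rcases hkey with h | h
  · right; exact ⟨h, by rw [hwk, h, zero_add]⟩
  · left; exact ⟨by rw [hwk, h, add_zero], h⟩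
end
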